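/- Tree policy gradient theorem (finite case): In a finite tree MDP with finite state space S and finite action space A, let π_θ(a|s) > 0 be a policy differentiable in a real parameter θ, and let p_θ(τ) = p_init(s_0) · ∏_{i ∈ N∖L} π_θ(a_i|s_i) p⁻(s_{ch⁻(i)}|s_i,a_i) p⁺(s_{ch⁺(i)}|s_i,a_i) be the induced distribution over finite tree-structured trajectories τ. Then the derivative with respect to θ of the expected total reward V^θ = E_{τ∼p_θ}[∑_{i∈N} r(s_i)] equals E_{τ∼p_θ}[∑_{i∈N∖L} (d/dθ log π_θ(a_i|s_i)) · ∑_{j∈d(i)} r(s_j)], where d(i) is the set of descendants of node i (including i). -/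

import Mathlib

/-- Finite binary tree trajectories of a tree MDP: every node carries a state,
every non-leaf node also carries an action. -/
inductive BT (S A : Type) : Type
  | leaf (s : S)
  | node (s : S) (a : A) (l r : BT S A)
deriving DecidableEq

namespace BT

variable {S A : Type}

/-- State at the root of the trajectory. -/
def root : BT S A → S
  | leaf s => s
  | node s _ _ _ => s

/-- Number of nodes. -/
def size : BT S A → ℕ
  | leaf _ => 1
  | node _ _ l r => size l + size r + 1

/-- Total reward collected over all nodes of the trajectory. -/
def reward (r : S → ℝ) : BT S A → ℝ
  | leaf s => r s
  | node s _ l ri => r s + reward r l + reward r ri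

/-- Probability of generating a given trajectory starting from its root state:
the product, over non-leaf nodes `i`, of `π(a_i|s_i) p⁻(s_{ch⁻(i)}|s_i,a_i)
p⁺(s_{ch⁺(i)}|s_i,a_i)`, together with the leaf-indicator consistency
conditions given by `lf`. -/
def prob (lf : S → Bool) (π : S → A → ℝ) (pm pp : S → A → S → ℝ) : BT S A → ℝ
  | leaf s => if lf s then 1 else 0
  | node s a l ri =>
      (if lf s then 0 else 1) * π s a * pm s a (root l) * pp s a (root ri)
        * prob lf π pm pp l * prob lf π pm pp ri

end BT

/-- The (finite) set of all trajectories of depth at most `n`. -/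
def treesUpTo (S A : Type) [Fintype S] [Fintype A] [DecidableEq S] [DecidableEq A] :
    ℕ → Finset (BT S A)
  | 0 => Finset.univ.image BT.leaf
  | n + 1 =>
      Finset.univ.image BT.leaf ∪
        ((Finset.univ ×ˢ Finset.univ ×ˢ treesUpTo S A n ×ˢ treesUpTo S A n).image
          (fun x : S × A × BT S A × BT S A => BT.node x.1 x.2.1 x.2.2.1 x.2.2.2))

namespace BT

/-- Tree policy-gradient integrand: the sum, over the non-leaf nodes `i` of the
trajectory, of `(d/dθ log π_θ(a_i|s_i))` times the total reward
`∑_{j ∈ d(i)} r(s_j)` of the subtree rooted at `i` (descendants including `i`). -/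
noncomputable def gradTerm {S A : Type} (r : S → ℝ) (π : ℝ → S → A → ℝ) (θ : ℝ) :
    BT S A → ℝ
  | leaf _ => 0
  | node s a l ri =>
      deriv (fun u => Real.log (π u s a)) θ * reward r (node s a l ri)
        + gradTerm r π θ l + gradTerm r π θ ri

end BT

/-! Group trajectories by their root state and write `V_n(s)`, `G_n(s)` for the expected
reward and the expected gradient integrand over trajectories of depth at most `n` rooted at
`s`. Below a non-leaf root the policy picks `a` and the two subtrees are generated
independently, so node-level sums factor into products of child expectations. The masses
`M_n(s)` of these truncated distributions are at most `1`; hence if `M_{n+1}(s) = 1` for all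
`θ`, a convexity argument forces `M_n(s') = 1` at every child state reachable with positive
probability. Then `V_{n+1}(s) = ∑ₐ π_θ(a|s) (r(s) + E⁻ V_n + E⁺ V_n)`, with `E^±` the average
over `p^±(·|s,a)`, and the product rule with `π_θ' = π_θ · (log π_θ)'` turns the derivative of
this into `G_{n+1}(s)`, by induction on `n`. -/

open Finset

namespace BT

variable {S A : Type}

theorem prob_nonneg (lf : S → Bool) {ρ : S → A → ℝ} {pm pp : S → A → S → ℝ}
    (hρ : ∀ s a, 0 ≤ ρ s a) (hpm : ∀ s a s', 0 ≤ pm s a s') (hpp : ∀ s a s', 0 ≤ pp s a s') :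
    ∀ τ : BT S A, 0 ≤ τ.prob lf ρ pm pp
  | leaf s => by unfold prob; split_ifs <;> norm_num
  | node s a l ri => by
      have hlf : (0 : ℝ) ≤ if lf s then 0 else 1 := by split_ifs <;> norm_num
      unfold prob
      exact mul_nonneg (mul_nonneg (mul_nonneg (mul_nonneg (mul_nonneg hlf (hρ s a))
        (hpm s a _)) (hpp s a _)) (prob_nonneg lf hρ hpm hpp l))
        (prob_nonneg lf hρ hpm hpp ri)

end BT

section WeightedAverage

variable {ι : Type*} [Fintype ι] {w x : ι → ℝ}

theorem sum_mul_le_one (hw : ∀ i, 0 ≤ w i) (hw1 : ∑ i, w i = 1) (hx : ∀ i, x i ≤ 1) :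
    ∑ i, w i * x i ≤ 1 :=
  hw1 ▸ sum_le_sum fun i _ => mul_le_of_le_one_right (hw i) (hx i)

theorem eq_one_of_sum_mul_eq_one (hw : ∀ i, 0 ≤ w i) (hw1 : ∑ i, w i = 1)
    (hx : ∀ i, x i ≤ 1) (h : ∑ i, w i * x i = 1) {i : ι} (hi : w i ≠ 0) : x i = 1 :=
  (mul_eq_left₀ hi).mp <|
    (sum_eq_sum_iff_of_le fun i _ => mul_le_of_le_one_right (hw i) (hx i)).mp
      (h.trans hw1.symm) i (mem_univ i)

theorem hasDerivAt_sum_mul {f : ι → ℝ → ℝ} {f' : ι → ℝ} {t : ℝ}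
    (hf : ∀ i, w i ≠ 0 → HasDerivAt (f i) (f' i) t) :
    HasDerivAt (fun u => ∑ i, w i * f i u) (∑ i, w i * f' i) t := by
  refine HasDerivAt.fun_sum fun i _ => ?_
  by_cases hi : w i = 0
  · simpa only [hi, zero_mul] using hasDerivAt_const t (0 : ℝ)
  · exact (hf i hi).const_mul (w i)

end WeightedAverage

section TreeMDP

variable {S A : Type} [Fintype S] [Fintype A] [DecidableEq S] [DecidableEq A]

theorem sum_filter_root_treesUpTo_zero (s : S) (F : BT S A → ℝ) :
    ∑ τ ∈ (treesUpTo S A 0).filter (fun τ => τ.root = s), F τ = F (.leaf s) := by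
  rw [sum_filter, treesUpTo, sum_image fun _ _ _ _ h => BT.leaf.inj h]
  exact (Fintype.sum_eq_single s fun _ h => if_neg h).trans (if_pos rfl)

theorem sum_filter_root_treesUpTo_succ (n : ℕ) (s : S) (F : BT S A → ℝ) :
    ∑ τ ∈ (treesUpTo S A (n + 1)).filter (fun τ => τ.root = s), F τ
      = F (.leaf s) + ∑ a, ∑ l ∈ treesUpTo S A n, ∑ ri ∈ treesUpTo S A n,
          F (.node s a l ri) := by
  have hdisj : Disjoint (univ.image (BT.leaf : S → BT S A))
      ((univ ×ˢ univ ×ˢ treesUpTo S A n ×ˢ treesUpTo S A n).image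
        fun x : S × A × BT S A × BT S A => BT.node x.1 x.2.1 x.2.2.1 x.2.2.2) := by
    simp only [disjoint_left, mem_image]
    rintro τ ⟨s', _, rfl⟩ ⟨x, _, h⟩
    cases h
  rw [sum_filter, treesUpTo, sum_union hdisj, sum_image fun _ _ _ _ h => BT.leaf.inj h,
    sum_image fun x _ y _ h => by
      injection h with h1 h2 h3 h4
      exact Prod.ext h1 (Prod.ext h2 (Prod.ext h3 h4))]
  simp only [sum_product]
  congr 1
  · exact (Fintype.sum_eq_single s fun _ h => if_neg h).trans (if_pos rfl)
  · refine (Fintype.sum_eq_single s fun _ h => ?_).trans ?_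
    · simp [BT.root, h]
    · simp [BT.root]

variable (lf : S → Bool) (pm pp : S → A → S → ℝ)

noncomputable def rootedExp (ρ : S → A → ℝ) (n : ℕ) (F : BT S A → ℝ) (s : S) : ℝ :=
  ∑ τ ∈ (treesUpTo S A n).filter (fun τ => τ.root = s), τ.prob lf ρ pm pp * F τ

-- Expectation of `G l ri` over the two subtrees `l`, `ri` (of depth at most `n`) generated
-- below a node carrying state `s` and action `a`.
noncomputable def nodeExp (ρ : S → A → ℝ) (n : ℕ) (s : S) (a : A)
    (G : BT S A → BT S A → ℝ) : ℝ :=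
  ∑ l ∈ treesUpTo S A n, ∑ ri ∈ treesUpTo S A n,
    pm s a l.root * l.prob lf ρ pm pp * (pp s a ri.root * ri.prob lf ρ pm pp) * G l ri

variable {lf pm pp}

theorem sum_treesUpTo_eq_sum_rootedExp (ρ : S → A → ℝ) (n : ℕ) (g : S → ℝ)
    (F : BT S A → ℝ) :
    ∑ τ ∈ treesUpTo S A n, g τ.root * τ.prob lf ρ pm pp * F τ
      = ∑ s, g s * rootedExp lf pm pp ρ n F s := by
  rw [← sum_fiberwise (treesUpTo S A n) BT.root]
  refine sum_congr rfl fun s _ => ?_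
  rw [rootedExp, mul_sum]
  refine sum_congr rfl fun τ hτ => ?_
  rw [(mem_filter.mp hτ).2, mul_assoc]

theorem rootedExp_zero (ρ : S → A → ℝ) (F : BT S A → ℝ) (s : S) :
    rootedExp lf pm pp ρ 0 F s = if lf s then F (.leaf s) else 0 := by
  rw [rootedExp, sum_filter_root_treesUpTo_zero, BT.prob]
  split_ifs <;> simp

theorem rootedExp_of_lf (ρ : S → A → ℝ) (F : BT S A → ℝ) {s : S} (hs : lf s) :
    ∀ n, rootedExp lf pm pp ρ n F s = F (.leaf s)
  | 0 => by simp [rootedExp_zero, hs]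
  | n + 1 => by simp [rootedExp, sum_filter_root_treesUpTo_succ, BT.prob, hs]

theorem rootedExp_succ_of_not_lf (ρ : S → A → ℝ) (n : ℕ) (F : BT S A → ℝ) {s : S}
    (hs : ¬ lf s) :
    rootedExp lf pm pp ρ (n + 1) F s
      = ∑ a, ρ s a * nodeExp lf pm pp ρ n s a fun l ri => F (.node s a l ri) := by
  simp only [rootedExp, sum_filter_root_treesUpTo_succ, BT.prob, hs, nodeExp, mul_sum]
  simp only [Bool.false_eq_true, if_false, zero_mul, zero_add]
  refine sum_congr rfl fun a _ => sum_congr rfl fun l _ => sum_congr rfl fun ri _ => ?_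
  ring

variable (ρ : S → A → ℝ) (n : ℕ) (s : S) (a : A)

theorem nodeExp_add (G G' : BT S A → BT S A → ℝ) :
    nodeExp lf pm pp ρ n s a (fun l ri => G l ri + G' l ri)
      = nodeExp lf pm pp ρ n s a G + nodeExp lf pm pp ρ n s a G' := by
  simp only [nodeExp, mul_add, sum_add_distrib]

theorem nodeExp_const_mul (c : ℝ) (G : BT S A → BT S A → ℝ) :
    nodeExp lf pm pp ρ n s a (fun l ri => c * G l ri) = c * nodeExp lf pm pp ρ n s a G := by
  simp only [nodeExp, mul_sum, mul_left_comm c]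

theorem nodeExp_mul (F H : BT S A → ℝ) :
    nodeExp lf pm pp ρ n s a (fun l ri => F l * H ri)
      = (∑ s', pm s a s' * rootedExp lf pm pp ρ n F s')
        * ∑ s', pp s a s' * rootedExp lf pm pp ρ n H s' := by
  rw [← sum_treesUpTo_eq_sum_rootedExp, ← sum_treesUpTo_eq_sum_rootedExp, sum_mul_sum, nodeExp]
  refine sum_congr rfl fun l _ => sum_congr rfl fun ri _ => ?_
  ring

theorem nodeExp_one :
    nodeExp lf pm pp ρ n s a (fun _ _ => 1)
      = (∑ s', pm s a s' * rootedExp lf pm pp ρ n (fun _ => 1) s')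
        * ∑ s', pp s a s' * rootedExp lf pm pp ρ n (fun _ => 1) s' := by
  simpa using nodeExp_mul ρ n s a (fun _ => 1) (fun _ => 1)

theorem nodeExp_affine
    (hm : ∑ s', pm s a s' * rootedExp lf pm pp ρ n (fun _ => 1) s' = 1)
    (hp : ∑ s', pp s a s' * rootedExp lf pm pp ρ n (fun _ => 1) s' = 1)
    (c : ℝ) (F H : BT S A → ℝ) :
    nodeExp lf pm pp ρ n s a (fun l ri => c + F l + H ri)
      = c + (∑ s', pm s a s' * rootedExp lf pm pp ρ n F s')
        + ∑ s', pp s a s' * rootedExp lf pm pp ρ n H s' := by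
  have hsplit : (fun l ri => c + F l + H ri)
      = fun l ri => (c * 1 + F l * (fun _ => 1) ri) + (fun _ => 1) l * H ri := by
    simp
  rw [hsplit, nodeExp_add, nodeExp_add, nodeExp_const_mul, nodeExp_one, nodeExp_mul,
    nodeExp_mul, hm, hp]
  ring

variable {ρ n s}

theorem rootedExp_one_nonneg (hρ : ∀ s a, 0 ≤ ρ s a) (hpm : ∀ s a s', 0 ≤ pm s a s')
    (hpp : ∀ s a s', 0 ≤ pp s a s') : 0 ≤ rootedExp lf pm pp ρ n (fun _ => 1) s :=
  sum_nonneg fun τ _ => by simpa using BT.prob_nonneg lf hρ hpm hpp τ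

theorem sum_mul_rootedExp_one_nonneg (hρ : ∀ s a, 0 ≤ ρ s a)
    (hpm : ∀ s a s', 0 ≤ pm s a s') (hpp : ∀ s a s', 0 ≤ pp s a s') (p : S → ℝ)
    (hp : ∀ s', 0 ≤ p s') : 0 ≤ ∑ s', p s' * rootedExp lf pm pp ρ n (fun _ => 1) s' :=
  sum_nonneg fun s' _ => mul_nonneg (hp s') (rootedExp_one_nonneg hρ hpm hpp)

theorem rootedExp_one_le_one (hρ : ∀ s a, 0 ≤ ρ s a) (hρ1 : ∀ s, ∑ a, ρ s a = 1)
    (hpm0 : ∀ s a s', 0 ≤ pm s a s') (hpm1 : ∀ s a, ∑ s', pm s a s' = 1)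
    (hpp0 : ∀ s a s', 0 ≤ pp s a s') (hpp1 : ∀ s a, ∑ s', pp s a s' = 1) :
    ∀ n s, rootedExp lf pm pp ρ n (fun _ => 1) s ≤ 1
  | 0, s => by rw [rootedExp_zero]; split_ifs <;> norm_num
  | n + 1, s => by
    by_cases hs : lf s
    · rw [rootedExp_of_lf ρ _ hs]
    · have ih := rootedExp_one_le_one hρ hρ1 hpm0 hpm1 hpp0 hpp1 n
      rw [rootedExp_succ_of_not_lf ρ n _ hs]
      refine sum_mul_le_one (hρ s) (hρ1 s) fun a => ?_
      rw [nodeExp_one]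
      exact mul_le_one₀ (sum_mul_le_one (hpm0 s a) (hpm1 s a) ih)
        (sum_mul_rootedExp_one_nonneg hρ hpm0 hpp0 _ (hpp0 s a))
        (sum_mul_le_one (hpp0 s a) (hpp1 s a) ih)

theorem sum_mul_rootedExp_one_eq_one_of_succ (hρ : ∀ s a, 0 < ρ s a)
    (hρ1 : ∀ s, ∑ a, ρ s a = 1)
    (hpm0 : ∀ s a s', 0 ≤ pm s a s') (hpm1 : ∀ s a, ∑ s', pm s a s' = 1)
    (hpp0 : ∀ s a s', 0 ≤ pp s a s') (hpp1 : ∀ s a, ∑ s', pp s a s' = 1)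
    (hs : ¬ lf s) (h : rootedExp lf pm pp ρ (n + 1) (fun _ => 1) s = 1) (a : A) :
    ∑ s', pm s a s' * rootedExp lf pm pp ρ n (fun _ => 1) s' = 1
      ∧ ∑ s', pp s a s' * rootedExp lf pm pp ρ n (fun _ => 1) s' = 1 := by
  have hρ0 : ∀ s a, 0 ≤ ρ s a := fun s a => (hρ s a).le
  have hle := rootedExp_one_le_one (lf := lf) hρ0 hρ1 hpm0 hpm1 hpp0 hpp1 n
  have hm1 := fun a => sum_mul_le_one (hpm0 s a) (hpm1 s a) hle
  have hp1 := fun a => sum_mul_le_one (hpp0 s a) (hpp1 s a) hle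
  have hm0 := fun a => sum_mul_rootedExp_one_nonneg (lf := lf) (n := n) hρ0 hpm0 hpp0 _ (hpm0 s a)
  have hp0 := fun a => sum_mul_rootedExp_one_nonneg (lf := lf) (n := n) hρ0 hpm0 hpp0 _ (hpp0 s a)
  simp only [rootedExp_succ_of_not_lf ρ n _ hs, nodeExp_one] at h
  have hprod := eq_one_of_sum_mul_eq_one (hρ0 s) (hρ1 s)
    (fun a => mul_le_one₀ (hm1 a) (hp0 a) (hp1 a)) h (hρ s a).ne'
  constructor <;> nlinarith [hm1 a, hp1 a, hm0 a, hp0 a]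

theorem rootedExp_reward_succ (r : S → ℝ) (hs : ¬ lf s)
    (hm : ∀ a, ∑ s', pm s a s' * rootedExp lf pm pp ρ n (fun _ => 1) s' = 1)
    (hp : ∀ a, ∑ s', pp s a s' * rootedExp lf pm pp ρ n (fun _ => 1) s' = 1) :
    rootedExp lf pm pp ρ (n + 1) (BT.reward r) s
      = ∑ a, ρ s a * (r s + (∑ s', pm s a s' * rootedExp lf pm pp ρ n (BT.reward r) s')
          + ∑ s', pp s a s' * rootedExp lf pm pp ρ n (BT.reward r) s') := by
  rw [rootedExp_succ_of_not_lf ρ n _ hs]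
  exact sum_congr rfl fun a _ => by rw [← nodeExp_affine ρ n s a (hm a) (hp a)]; rfl

theorem rootedExp_gradTerm_succ (r : S → ℝ) (π : ℝ → S → A → ℝ) (θ : ℝ)
    (hs : ¬ lf s)
    (hm : ∀ a, ∑ s', pm s a s' * rootedExp lf pm pp (π θ) n (fun _ => 1) s' = 1)
    (hp : ∀ a, ∑ s', pp s a s' * rootedExp lf pm pp (π θ) n (fun _ => 1) s' = 1) :
    rootedExp lf pm pp (π θ) (n + 1) (BT.gradTerm r π θ) s
      = ∑ a, π θ s a * (deriv (fun u => Real.log (π u s a)) θ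
          * (r s + (∑ s', pm s a s' * rootedExp lf pm pp (π θ) n (BT.reward r) s')
            + ∑ s', pp s a s' * rootedExp lf pm pp (π θ) n (BT.reward r) s')
          + ((∑ s', pm s a s' * rootedExp lf pm pp (π θ) n (BT.gradTerm r π θ) s')
            + ∑ s', pp s a s' * rootedExp lf pm pp (π θ) n (BT.gradTerm r π θ) s')) := by
  rw [rootedExp_succ_of_not_lf (π θ) n _ hs]
  refine sum_congr rfl fun a _ => ?_
  have hsplit : (fun l ri => BT.gradTerm r π θ (.node s a l ri))
      = fun l ri => deriv (fun u => Real.log (π u s a)) θ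
          * (r s + BT.reward r l + BT.reward r ri)
          + (0 + BT.gradTerm r π θ l + BT.gradTerm r π θ ri) := by
    funext l ri
    simp only [BT.gradTerm, BT.reward]
    ring
  rw [hsplit, nodeExp_add, nodeExp_const_mul, nodeExp_affine _ _ _ _ (hm a) (hp a),
    nodeExp_affine _ _ _ _ (hm a) (hp a), zero_add]

theorem hasDerivAt_rootedExp_reward (r : S → ℝ) (π : ℝ → S → A → ℝ)
    (hπpos : ∀ θ s a, 0 < π θ s a)
    (hπdiff : ∀ s a, Differentiable ℝ (fun θ => π θ s a))
    (hπsum : ∀ θ s, ∑ a, π θ s a = 1)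
    (hpm0 : ∀ s a s', 0 ≤ pm s a s') (hpm1 : ∀ s a, ∑ s', pm s a s' = 1)
    (hpp0 : ∀ s a s', 0 ≤ pp s a s') (hpp1 : ∀ s a, ∑ s', pp s a s' = 1) (θ₀ : ℝ) :
    ∀ n s, (∀ θ, rootedExp lf pm pp (π θ) n (fun _ => 1) s = 1) →
      HasDerivAt (fun θ => rootedExp lf pm pp (π θ) n (BT.reward r) s)
        (rootedExp lf pm pp (π θ₀) n (BT.gradTerm r π θ₀) s) θ₀ := by
  have hleaf : ∀ n s, lf s → HasDerivAt (fun θ => rootedExp lf pm pp (π θ) n (BT.reward r) s)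
      (rootedExp lf pm pp (π θ₀) n (BT.gradTerm r π θ₀) s) θ₀ := fun n s hs => by
    simp only [rootedExp_of_lf _ _ hs]
    exact hasDerivAt_const _ _
  intro n
  induction n with
  | zero =>
    intro s hmass
    exact hleaf 0 s (by simpa [rootedExp_zero] using hmass θ₀)
  | succ n ih =>
    intro s hmass
    by_cases hs : lf s
    · exact hleaf _ s hs
    have hchild := fun θ => sum_mul_rootedExp_one_eq_one_of_succ (hπpos θ) (hπsum θ)
      hpm0 hpm1 hpp0 hpp1 hs (hmass θ)
    have hchildDeriv : ∀ p : S → A → S → ℝ, (∀ s a s', 0 ≤ p s a s') →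
        (∀ s a, ∑ s', p s a s' = 1) → ∀ a,
        (∀ θ, ∑ s', p s a s' * rootedExp lf pm pp (π θ) n (fun _ => 1) s' = 1) →
        HasDerivAt (fun θ => ∑ s', p s a s' * rootedExp lf pm pp (π θ) n (BT.reward r) s')
          (∑ s', p s a s' * rootedExp lf pm pp (π θ₀) n (BT.gradTerm r π θ₀) s') θ₀ :=
      fun p hp0 hp1 a hp => hasDerivAt_sum_mul fun s' hs' => ih s' fun θ =>
        eq_one_of_sum_mul_eq_one (hp0 s a) (hp1 s a)
          (rootedExp_one_le_one (fun s a => (hπpos θ s a).le) (hπsum θ) hpm0 hpm1 hpp0 hpp1 n)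
          (hp θ) hs'
    simp only [rootedExp_reward_succ r hs (fun a => (hchild _ a).1) (fun a => (hchild _ a).2),
      rootedExp_gradTerm_succ r π θ₀ hs (fun a => (hchild θ₀ a).1)
        (fun a => (hchild θ₀ a).2)]
    refine HasDerivAt.fun_sum fun a _ => ?_
    have hπa := (hπdiff s a θ₀).hasDerivAt
    refine (hπa.mul (((hchildDeriv pm hpm0 hpm1 a fun θ => (hchild θ a).1).const_add (r s)).add
      (hchildDeriv pp hpp0 hpp1 a fun θ => (hchild θ a).2))).congr_deriv ?_
    rw [Pi.add_apply, (hπa.log (hπpos θ₀ s a).ne').deriv]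
    field_simp [(hπpos θ₀ s a).ne']

end TreeMDP

theorem stmt2_general {S A : Type} [Fintype S] [Fintype A] [DecidableEq S] [DecidableEq A]
    (lf : S → Bool) (pinit : S → ℝ) (pm pp : S → A → S → ℝ)
    (π : ℝ → S → A → ℝ) (r : S → ℝ) (D : ℕ) (θ₀ : ℝ)
    (hπpos : ∀ θ s a, 0 < π θ s a)
    (hπdiff : ∀ s a, Differentiable ℝ (fun θ => π θ s a))
    (hπsum : ∀ θ s, ∑ a : A, π θ s a = 1)
    (hpm0 : ∀ s a s', 0 ≤ pm s a s') (hpm1 : ∀ s a, ∑ s' : S, pm s a s' = 1)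
    (hpp0 : ∀ s a s', 0 ≤ pp s a s') (hpp1 : ∀ s a, ∑ s' : S, pp s a s' = 1)
    -- uniformly bounded trajectories: from every state, the trajectories of
    -- depth at most `D` carry all the probability mass, for every `θ`
    (hmass : ∀ θ s, ∑ τ ∈ (treesUpTo S A D).filter (fun τ => BT.root τ = s),
        BT.prob lf (π θ) pm pp τ = 1) :
    HasDerivAt
      (fun θ => ∑ τ ∈ treesUpTo S A D,
        pinit (BT.root τ) * BT.prob lf (π θ) pm pp τ * BT.reward r τ)
      (∑ τ ∈ treesUpTo S A D,
        pinit (BT.root τ) * BT.prob lf (π θ₀) pm pp τ * BT.gradTerm r π θ₀ τ)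
      θ₀ := by
  simp only [sum_treesUpTo_eq_sum_rootedExp]
  refine HasDerivAt.fun_sum fun s _ => HasDerivAt.const_mul (pinit s) ?_
  refine hasDerivAt_rootedExp_reward r π hπpos hπdiff hπsum hpm0 hpm1 hpp0 hpp1 θ₀ D s
    fun θ => ?_
  simpa [rootedExp] using hmass θ s

/-- Tree policy gradient theorem (finite case): for a finite tree MDP with
positive differentiable policy `π_θ` and trajectories of uniformly bounded
size, the derivative of the expected total reward
`V^θ = E_{τ∼p_θ}[∑_{i∈N} r(s_i)]` equals
`E_{τ∼p_θ}[∑_{i∈N∖L} (d/dθ log π_θ(a_i|s_i)) ∑_{j∈d(i)} r(s_j)]`. -/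
theorem stmt2 {S A : Type} [Fintype S] [Fintype A] [DecidableEq S] [DecidableEq A]
    (lf : S → Bool) (pinit : S → ℝ) (pm pp : S → A → S → ℝ)
    (π : ℝ → S → A → ℝ) (r : S → ℝ) (D : ℕ) (θ₀ : ℝ)
    (hπpos : ∀ θ s a, 0 < π θ s a)
    (hπdiff : ∀ s a, Differentiable ℝ (fun θ => π θ s a))
    (hπsum : ∀ θ s, ∑ a : A, π θ s a = 1)
    (hpminit : ∀ s, 0 ≤ pinit s) (hpinit1 : ∑ s : S, pinit s = 1)
    (hpm0 : ∀ s a s', 0 ≤ pm s a s') (hpm1 : ∀ s a, ∑ s' : S, pm s a s' = 1)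
    (hpp0 : ∀ s a s', 0 ≤ pp s a s') (hpp1 : ∀ s a, ∑ s' : S, pp s a s' = 1)
    -- uniformly bounded trajectories: from every state, the trajectories of
    -- depth at most `D` carry all the probability mass, for every `θ`
    (hmass : ∀ θ s, ∑ τ ∈ (treesUpTo S A D).filter (fun τ => BT.root τ = s),
        BT.prob lf (π θ) pm pp τ = 1) :
    HasDerivAt
      (fun θ => ∑ τ ∈ treesUpTo S A D,
        pinit (BT.root τ) * BT.prob lf (π θ) pm pp τ * BT.reward r τ)
      (∑ τ ∈ treesUpTo S A D,
        pinit (BT.root τ) * BT.prob lf (π θ₀) pm pp τ * BT.gradTerm r π θ₀ τ)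
      θ₀ :=
  stmt2_general lf pinit pm pp π r D θ₀ hπpos hπdiff hπsum hpm0 hpm1 hpp0 hpp1 hmass
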